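/- With A, w, σ, M, β = ∑_j v_j a_j as above (v_j ∈ [-1,0], β of maximal weight in M): if J is a proper subset of {j : v_j = -1}, then -∑_{j∈J} a_j - ∑_{j: -1<v_j<0} a_j does not lie in the relative interior σ° of σ. -/

import Mathlib

lemma mem_intrinsicInterior_iff' {E : Type*} [NormedAddCommGroup E] [NormedSpace ℝ E]
    (s : Set E) (x : E) :
    x ∈ intrinsicInterior ℝ s ↔ x ∈ affineSpan ℝ s ∧
      ∃ ε > 0, ∀ p ∈ (affineSpan ℝ s : Set E), dist p x < ε → p ∈ s := by
  rw [mem_intrinsicInterior]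
  constructor
  · rintro ⟨y, hy, rfl⟩
    refine ⟨y.2, ?_⟩
    rw [mem_interior_iff_mem_nhds, Metric.mem_nhds_iff] at hy
    obtain ⟨ε, hε, hball⟩ := hy
    exact ⟨ε, hε, fun p hp hd => hball (show (⟨p, hp⟩ : affineSpan ℝ s) ∈ Metric.ball y ε from by
      rw [Metric.mem_ball, Subtype.dist_eq]; exact hd)⟩
  · rintro ⟨hx, ε, hε, h⟩
    refine ⟨⟨x, hx⟩, ?_, rfl⟩
    rw [mem_interior_iff_mem_nhds, Metric.mem_nhds_iff]
    exact ⟨ε, hε, fun p hp => h p p.2 (by rwa [Metric.mem_ball, Subtype.dist_eq] at hp)⟩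

/-- With `A`, `w`, `σ`, `M`, and a weight-maximizing `β = ∑ v_j a_j` (`v_j ∈ [-1,0]`):
if `J` is a proper subset of `{j : v_j = -1}`, then
`-∑_{j∈J} a_j - ∑_{j : -1<v_j<0} a_j ∉ σ°`. -/
theorem not_mem_relint_of_proper_subset (n N : ℕ) (a : Fin N → Fin n → ℤ) (w : Fin n → ℚ)
    (hw : ∀ j, ∑ i, w i * (a j i : ℚ) = 1)
    (negC : Set (Fin n → ℝ))
    (hnegC : negC = {x | ∃ c : Fin N → ℝ, (∀ j, 0 ≤ c j) ∧
      x = ∑ j, c j • (fun i => (-(a j i) : ℝ))})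
    (σ : Set (Fin n → ℝ)) (hσsub : σ ⊆ negC) (hσ : IsExposed ℝ negC σ)
    (Q : Fin n → ℚ) (hQ : ∃ q : Fin N → ℚ, Q = ∑ j, q j • (fun i => (a j i : ℚ)))
    (M : Set (Fin n → ℝ))
    (hM : M = {x | (∃ m : Fin N → ℤ,
        x = (fun i => (Q i : ℝ)) + ∑ j, m j • (fun i => (a j i : ℝ))) ∧
      x ∈ intrinsicInterior ℝ σ})
    (v : Fin N → ℚ) (hv : ∀ j, -1 ≤ v j ∧ v j ≤ 0)
    (β : Fin n → ℝ) (hβ : β = ∑ j, (v j : ℝ) • (fun i => (a j i : ℝ)))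
    (hβM : β ∈ M)
    (hmax : ∀ u ∈ M, ∑ i, (w i : ℝ) * u i ≤ ∑ i, (w i : ℝ) * β i)
    (J : Finset (Fin N)) (hJ : ∀ j ∈ J, v j = -1)
    (hproper : ∃ j, v j = -1 ∧ j ∉ J) :
    (-(∑ j ∈ J, fun i => (a j i : ℝ)) -
        ∑ j ∈ Finset.univ.filter (fun j => -1 < v j ∧ v j < 0), (fun i => (a j i : ℝ)))
      ∉ intrinsicInterior ℝ σ := by
  intro hy
  classical
  obtain ⟨j₀, hj₀v, hj₀J⟩ := hproper
  -- notation
  set A : Fin N → (Fin n → ℝ) := fun j => fun i => (a j i : ℝ) with hA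
  set F : Finset (Fin N) := Finset.univ.filter (fun j => -1 < v j ∧ v j < 0) with hFdef
  set y : Fin n → ℝ := (-(∑ j ∈ J, fun i => (a j i : ℝ)) -
      ∑ j ∈ F, (fun i => (a j i : ℝ))) with hydef
  -- β ∈ M unfold
  rw [hM] at hβM
  obtain ⟨⟨m, hm⟩, hβrel⟩ := hβM
  have hβσ : β ∈ σ := intrinsicInterior_subset hβrel
  obtain ⟨l, hl⟩ := hσ ⟨β, hβσ⟩
  -- basic negC facts
  have hC0 : (0 : Fin n → ℝ) ∈ negC := by
    rw [hnegC]
    exact ⟨0, fun j => le_refl 0, by simp⟩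
  have hCadd : ∀ x₁ ∈ negC, ∀ x₂ ∈ negC, x₁ + x₂ ∈ negC := by
    rw [hnegC]
    rintro x₁ ⟨c₁, hc₁, rfl⟩ x₂ ⟨c₂, hc₂, rfl⟩
    exact ⟨c₁ + c₂, fun j => add_nonneg (hc₁ j) (hc₂ j), by
      rw [← Finset.sum_add_distrib]
      exact Finset.sum_congr rfl fun j _ => (add_smul _ _ _).symm⟩
  have hCsmul : ∀ (t : ℝ), 0 ≤ t → ∀ x ∈ negC, t • x ∈ negC := by
    rw [hnegC]
    rintro t ht x ⟨c, hc, rfl⟩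
    exact ⟨t • c, fun j => mul_nonneg ht (hc j), by
      rw [Finset.smul_sum]
      exact Finset.sum_congr rfl fun j _ => (smul_smul _ _ _)⟩
  have hCa : ∀ j : Fin N, -A j ∈ negC := by
    intro j
    rw [hnegC]
    refine ⟨fun j' => if j' = j then 1 else 0, fun j' => by positivity, ?_⟩
    rw [Finset.sum_eq_single j (fun b _ hb => by simp [hb]) (by simp)]
    funext i
    simp [hA]
  -- l vanishes on σ, σ characterization
  have hl0 : ∀ x ∈ σ, l x = 0 := by
    intro x hx
    have hx' := hx
    rw [hl] at hx'
    obtain ⟨hxC, hxmax⟩ := hx'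
    have h1 : (0:ℝ) ≤ l x := by simpa using hxmax 0 hC0
    have h2 : l ((2:ℝ) • x) ≤ l x := hxmax _ (hCsmul 2 (by norm_num) x hxC)
    rw [map_smul, smul_eq_mul] at h2
    linarith
  have hlneg : ∀ x ∈ negC, l x ≤ 0 := by
    intro x hx
    have : l x ≤ l β := by
      rw [hl] at hβσ
      exact hβσ.2 x hx
    linarith [hl0 β hβσ]
  have hσchar : ∀ x, x ∈ σ ↔ x ∈ negC ∧ l x = 0 := by
    intro x
    constructor
    · intro hx
      exact ⟨hσsub hx, hl0 x hx⟩
    · rintro ⟨hxC, hxl⟩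
      rw [hl]
      exact ⟨hxC, fun z hz => by rw [hxl]; exact hlneg z hz⟩
  -- σ is a convex cone
  have hs0 : (0 : Fin n → ℝ) ∈ σ := (hσchar 0).2 ⟨hC0, map_zero l⟩
  have hsadd : ∀ x₁ ∈ σ, ∀ x₂ ∈ σ, x₁ + x₂ ∈ σ := by
    intro x₁ h₁ x₂ h₂
    rw [hσchar] at h₁ h₂ ⊢
    exact ⟨hCadd _ h₁.1 _ h₂.1, by rw [map_add, h₁.2, h₂.2, add_zero]⟩
  have hssmul : ∀ (t : ℝ), 0 ≤ t → ∀ x ∈ σ, t • x ∈ σ := by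
    intro t ht x hx
    rw [hσchar] at hx ⊢
    exact ⟨hCsmul t ht x hx.1, by rw [map_smul, hx.2, smul_zero]⟩
  have hface : ∀ j : Fin N, v j < 0 → -A j ∈ σ := by
    have hlβ : l β = 0 := ((hσchar β).1 hβσ).2
    have hsum : l β = ∑ j, (-(v j : ℝ)) * l (-A j) := by
      rw [hβ, map_sum]
      refine Finset.sum_congr rfl fun j _ => ?_
      rw [show (fun i => (a j i : ℝ)) = A j from by rw [hA], map_smul, map_neg]
      rw [smul_eq_mul]
      ring
    have hterm : ∀ j ∈ Finset.univ, (-(v j : ℝ)) * l (-A j) ≤ 0 := by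
      intro j _
      apply mul_nonpos_of_nonneg_of_nonpos
      · simp only [neg_nonneg]
        exact_mod_cast (hv j).2
      · exact hlneg _ (hCa j)
    have hz := (Finset.sum_eq_zero_iff_of_nonpos hterm).1 (by rw [← hsum, hlβ])
    intro j hj
    have hj' : (-(v j : ℝ)) * l (-A j) = 0 := hz j (Finset.mem_univ j)
    have hvne : (-(v j : ℝ)) ≠ 0 := by
      simp only [ne_eq, neg_eq_zero]
      exact_mod_cast hj.ne
    have : l (-A j) = 0 := by
      rcases mul_eq_zero.1 hj' with h | h
      · exact absurd h hvne
      · exact h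
    exact (hσchar _).2 ⟨hCa j, this⟩
  -- unpack relative interior of y
  rw [mem_intrinsicInterior_iff'] at hy
  obtain ⟨hyS, ε, hε, hball⟩ := hy
  have hzrel' : β + A j₀ ∈ intrinsicInterior ℝ σ := by
    classical
    have hσS : σ ⊆ (affineSpan ℝ σ : Set (Fin n → ℝ)) := subset_affineSpan ℝ σ
    -- t
    set t : ℝ := if hF : F.Nonempty then min 1 (F.inf' hF (fun j => -(v j : ℝ))) else 1 with htdef
    have ht0 : 0 < t := by
      rw [htdef]
      split_ifs with hF
      · refine lt_min one_pos ?_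
        rw [Finset.lt_inf'_iff]
        intro j hj
        rw [hFdef, Finset.mem_filter] at hj
        have : (v j : ℝ) < 0 := by exact_mod_cast hj.2.2
        linarith
      · exact one_pos
    have ht1 : t ≤ 1 := by
      rw [htdef]
      split_ifs with hF
      · exact min_le_left _ _
      · exact le_refl 1
    have htF : ∀ j ∈ F, t ≤ -(v j : ℝ) := by
      intro j hj
      rw [htdef, dif_pos ⟨j, hj⟩]
      exact (min_le_right _ _).trans (Finset.inf'_le _ hj)
    -- ε₁
    set ε₁ : ℝ := min 1 (ε / (2 * (‖A j₀‖ + 1))) with hε₁def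
    have hε₁0 : 0 < ε₁ := lt_min one_pos (by positivity)
    have hε₁1 : ε₁ ≤ 1 := min_le_left _ _
    have hε₁a : ε₁ * ‖A j₀‖ ≤ ε / 2 := by
      have h1 : ε₁ ≤ ε / (2 * (‖A j₀‖ + 1)) := min_le_right _ _
      have h2 : (0:ℝ) ≤ ‖A j₀‖ := norm_nonneg _
      have h3 : ε / (2 * (‖A j₀‖ + 1)) * (‖A j₀‖ + 1) = ε / 2 := by
        field_simp
      nlinarith [mul_le_mul_of_nonneg_right h1 h2]
    have htε₁ : t * ε₁ ≤ 1 := by nlinarith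
    -- coefficients
    set d : Fin N → ℝ := (fun j => -(v j : ℝ) - (if j = j₀ then 1 - t * ε₁ else 0) -
        (if j ∈ J then t else 0) - (if j ∈ F then t else 0)) with hddef
    have hj₀F : j₀ ∉ F := by
      rw [hFdef, Finset.mem_filter]
      rintro ⟨-, h, -⟩
      rw [hj₀v] at h
      exact lt_irrefl _ h
    have hd0 : ∀ j, 0 ≤ d j := by
      intro j
      simp only [hddef]
      by_cases h0 : j = j₀
      · rw [if_pos h0, if_neg (by rw [h0]; exact hj₀J), if_neg (by rw [h0]; exact hj₀F)]
        have hvj : (v j : ℝ) = -1 := by rw [h0, hj₀v]; norm_num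
        rw [hvj]
        nlinarith
      · rw [if_neg h0]
        by_cases h1 : j ∈ J
        · have hvj : (v j : ℝ) = -1 := by rw [hJ j h1]; norm_num
          have h2 : j ∉ F := by
            rw [hFdef, Finset.mem_filter]
            rintro ⟨-, h, -⟩
            rw [hJ j h1] at h
            exact lt_irrefl _ h
          rw [if_pos h1, if_neg h2, hvj]
          linarith
        · rw [if_neg h1]
          by_cases h2 : j ∈ F
          · rw [if_pos h2]
            have := htF j h2
            linarith
          · rw [if_neg h2]
            have : (v j : ℝ) ≤ 0 := by exact_mod_cast (hv j).2
            linarith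
    have hdv : ∀ j, 0 < d j → v j < 0 := by
      intro j hj
      by_contra hvj
      push_neg at hvj
      have hvj' : v j = 0 := le_antisymm (hv j).2 hvj
      rw [hddef] at hj
      simp only [hvj'] at hj
      push_cast at hj
      have e1 : (0:ℝ) ≤ (if j = j₀ then 1 - t * ε₁ else 0) := by
        split_ifs <;> nlinarith
      have e2 : (0:ℝ) ≤ (if j ∈ J then t else 0) := by split_ifs <;> linarith
      have e3 : (0:ℝ) ≤ (if j ∈ F then t else 0) := by split_ifs <;> linarith
      linarith
    set c : Fin n → ℝ := ∑ j, d j • (-A j) with hcdef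
    have hcσ : c ∈ σ := by
      rw [hcdef]
      refine Finset.sum_induction _ (· ∈ σ) (fun x₁ x₂ h₁ h₂ => hsadd x₁ h₁ x₂ h₂) hs0 ?_
      intro j _
      rcases eq_or_lt_of_le (hd0 j) with h | h
      · rw [← h, zero_smul]
        exact hs0
      · exact hssmul _ (hd0 j) _ (hface j (hdv j h))
    have hkey : β + A j₀ = t • (y + ε₁ • A j₀) + c := by
      rw [hcdef]
      funext i
      have e0 : ((a j₀ i : ℝ)) = ∑ j, (if j = j₀ then (a j i : ℝ) else 0) := by
        rw [Finset.sum_ite_eq' Finset.univ j₀ (fun j => (a j i : ℝ))]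
        simp
      have e1 : ∑ j ∈ J, (a j i : ℝ) = ∑ j, (if j ∈ J then (a j i : ℝ) else 0) := by
        rw [Finset.sum_ite_mem, Finset.univ_inter]
      have e2 : ∑ j ∈ F, (a j i : ℝ) = ∑ j, (if j ∈ F then (a j i : ℝ) else 0) := by
        rw [Finset.sum_ite_mem, Finset.univ_inter]
      simp only [hβ, hydef, hA, hddef, Pi.add_apply, Pi.smul_apply, Pi.sub_apply, Pi.neg_apply,
        Finset.sum_apply, smul_eq_mul]
      rw [e0, e1, e2]
      simp only [← Finset.sum_neg_distrib, ← Finset.sum_sub_distrib, ← Finset.sum_add_distrib,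
        Finset.mul_sum]
      refine Finset.sum_congr rfl fun j _ => ?_
      split_ifs <;> ring
    -- direction facts
    have hdirA : A j₀ ∈ (affineSpan ℝ σ).direction := by
      have h := AffineSubspace.vsub_mem_direction (hσS hs0)
        (hσS (hface j₀ (by rw [hj₀v]; norm_num)))
      simpa using h
    have hzS : β + A j₀ ∈ affineSpan ℝ σ := by
      have := AffineSubspace.vadd_mem_of_mem_direction hdirA (hσS hβσ)
      simpa [add_comm] using this
    rw [mem_intrinsicInterior_iff']
    refine ⟨hzS, t * (ε / 2), by positivity, ?_⟩
    intro q hqS hdist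
    set dd : Fin n → ℝ := q - (β + A j₀) with hdddef
    have hnd : ‖dd‖ < t * (ε / 2) := by
      rw [hdddef, ← dist_eq_norm]
      exact hdist
    have hpS : y + ε₁ • A j₀ + t⁻¹ • dd ∈ affineSpan ℝ σ := by
      have h1 : ε₁ • A j₀ + t⁻¹ • dd ∈ (affineSpan ℝ σ).direction := by
        refine Submodule.add_mem _ (Submodule.smul_mem _ _ hdirA) (Submodule.smul_mem _ _ ?_)
        have := AffineSubspace.vsub_mem_direction hqS hzS
        simpa [hdddef] using this
      have := AffineSubspace.vadd_mem_of_mem_direction h1 hyS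
      have e : (ε₁ • A j₀ + t⁻¹ • dd) +ᵥ y = y + ε₁ • A j₀ + t⁻¹ • dd := by
        simp [vadd_eq_add]
        abel
      rwa [e] at this
    have hpdist : dist (y + ε₁ • A j₀ + t⁻¹ • dd) y < ε := by
      have e : y + ε₁ • A j₀ + t⁻¹ • dd - y = ε₁ • A j₀ + t⁻¹ • dd := by abel
      rw [dist_eq_norm, e]
      have h1 : ‖ε₁ • A j₀ + t⁻¹ • dd‖ ≤ ‖ε₁ • A j₀‖ + ‖t⁻¹ • dd‖ := norm_add_le _ _
      have h2 : ‖ε₁ • A j₀‖ = ε₁ * ‖A j₀‖ := by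
        rw [norm_smul, Real.norm_eq_abs, abs_of_pos hε₁0]
      have h3 : ‖t⁻¹ • dd‖ = t⁻¹ * ‖dd‖ := by
        rw [norm_smul, Real.norm_eq_abs, abs_of_pos (by positivity)]
      have h4 : t⁻¹ * ‖dd‖ < ε / 2 := (inv_mul_lt_iff₀ ht0).2 hnd
      linarith
    have hpσ : y + ε₁ • A j₀ + t⁻¹ • dd ∈ σ := hball _ hpS hpdist
    have hq : q = t • (y + ε₁ • A j₀ + t⁻¹ • dd) + c := by
      have e : t • (t⁻¹ • dd) = dd := smul_inv_smul₀ ht0.ne' dd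
      calc q = (β + A j₀) + dd := by rw [hdddef]; abel
      _ = (t • (y + ε₁ • A j₀) + c) + dd := by rw [← hkey]
      _ = t • (y + ε₁ • A j₀ + t⁻¹ • dd) + c := by
          conv_rhs => rw [smul_add, e]
          exact add_right_comm _ _ _
    rw [hq]
    exact hsadd _ (hssmul t ht0.le _ hpσ) _ hcσ
  -- the shifted point is in M
  have hzrel : β + A j₀ ∈ intrinsicInterior ℝ σ := hzrel'
  have hzM : β + A j₀ ∈ M := by
    rw [hM]
    refine ⟨⟨fun j => m j + if j = j₀ then 1 else 0, ?_⟩, hzrel⟩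
    show β + A j₀ = (fun i => (Q i : ℝ)) +
      ∑ j, (m j + if j = j₀ then (1:ℤ) else 0) • (fun i => (a j i : ℝ))
    have e : ∑ j, (m j + if j = j₀ then (1:ℤ) else 0) • (fun i => (a j i : ℝ)) =
        (∑ j, m j • (fun i => (a j i : ℝ))) + A j₀ := by
      simp only [add_smul]
      rw [Finset.sum_add_distrib]
      congr 1
      calc ∑ j, (if j = j₀ then (1:ℤ) else 0) • (fun i => (a j i : ℝ))
          = ∑ j, (if j = j₀ then (fun i => (a j i : ℝ)) else 0) := by
            refine Finset.sum_congr rfl fun j _ => ?_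
            split_ifs <;> simp
        _ = A j₀ := by
            rw [Finset.sum_ite_eq' Finset.univ j₀]
            simp [hA]
    rw [e, hm]
    abel
  -- weight contradiction
  have hwt := hmax (β + A j₀) hzM
  have hsplit : ∑ i, (w i : ℝ) * ((β + A j₀) i) =
      (∑ i, (w i : ℝ) * β i) + ∑ i, (w i : ℝ) * (a j₀ i : ℝ) := by
    rw [← Finset.sum_add_distrib]
    refine Finset.sum_congr rfl fun i _ => ?_
    simp only [Pi.add_apply, hA]
    ring
  have hone : ∑ i, (w i : ℝ) * (a j₀ i : ℝ) = 1 := by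
    have h := hw j₀
    have h' : ((∑ i, w i * (a j₀ i : ℚ) : ℚ) : ℝ) = 1 := by rw [h]; norm_num
    push_cast at h'
    exact h'
  rw [hsplit, hone] at hwt
  linarith
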